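/- arXiv:1710.03654 — 4 statements merged into one kernel-verified Lean document; each statement's English description precedes it below -/
import Mathlib

section
/- Consider the quantized spectral compressed sensing model with a general quantizer. Assume sigma > 0. Then the Fisher information matrix I(kappa) in R^{3K x 3K} for estimating the unknown parameter vector kappa, defined as I(kappa) = E[(d/dkappa log p(y|kappa)) (d/dkappa log p(y|kappa))^T] where the expectation is over the discrete random vector y, equals (1/(pi*sigma^2)) * sum_{i=1}^m [ Gamma_i^R(kappa) * (ds_i/dkappa)(ds_i/dkappa)^T + Gamma_i^I(kappa) * (dr_i/dkappa)(dr_i/dkappa)^T ]. -/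
open scoped BigOperators Real
open MeasureTheory ProbabilityTheory Finset

noncomputable section

/-- The spectral atom `v(f) = (1, e^{j2πf}, …, e^{j2π(n-1)f})ᵀ ∈ ℂⁿ`. -/
def vAtom (n : ℕ) (f : ℝ) : Fin n → ℂ :=
  fun k => Complex.exp (2 * Real.pi * Complex.I * f * (k : ℕ))

/-- `⟨a, x⟩ = aᴴ x`. -/
def dotH {n : ℕ} (a x : Fin n → ℂ) : ℂ := ∑ k, (starRingEnd ℂ) (a k) * x k

/-- The index in `Fin (3K)` of the `j`-th parameter (`j = 0`: frequency, `j = 1`: amplitude,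
`j = 2`: phase) of the `k`-th sinusoid. -/
def pidx {K : ℕ} (k : Fin K) (j : Fin 3) : Fin (3 * K) :=
  ⟨3 * k.val + j.val, by have := k.isLt; have := j.isLt; omega⟩

/-- The signal `x⋆(κ) = ∑ₖ Aₖ e^{j2πφₖ} v(fₖ)` parametrized by
`κ = (fₖ, Aₖ, φₖ)ₖ ∈ ℝ^{3K}`. -/
def xstar (n K : ℕ) (κ : Fin (3 * K) → ℝ) : Fin n → ℂ :=
  ∑ k : Fin K,
    ((κ (pidx k 1) : ℂ) * Complex.exp (2 * Real.pi * Complex.I * κ (pidx k 2))) •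
      vAtom n (κ (pidx k 0))

/-- `sᵢ(κ) = Re⟨aᵢ, x⋆(κ)⟩`. -/
def sFun (n K : ℕ) (a : Fin n → ℂ) (κ : Fin (3 * K) → ℝ) : ℝ := (dotH a (xstar n K κ)).re

/-- `rᵢ(κ) = Im⟨aᵢ, x⋆(κ)⟩`. -/
def rFun (n K : ℕ) (a : Fin n → ℂ) (κ : Fin (3 * K) → ℝ) : ℝ := (dotH a (xstar n K κ)).im

/-- `Φ(u) = (1/√π) ∫_0^u e^{-t²} dt`. -/
def Φq (u : ℝ) : ℝ := (Real.sqrt Real.pi)⁻¹ * ∫ t in (0:ℝ)..u, Real.exp (-t ^ 2)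

/-- `Φ((u - s)/σ)`, extended to the infinite breakpoints by `Φ(∓∞) = ∓1/2`. -/
def Φe (σ s : ℝ) (u : EReal) : ℝ :=
  if u = ⊥ then -(1 / 2) else if u = ⊤ then 1 / 2 else Φq ((u.toReal - s) / σ)

/-- `e^{-(u-s)²/σ²}`, extended by `0` at the infinite breakpoints. -/
def Ge (σ s : ℝ) (u : EReal) : ℝ :=
  if u = ⊥ ∨ u = ⊤ then 0 else Real.exp (-(u.toReal - s) ^ 2 / σ ^ 2)

/-- The probability that a real Gaussian with mean `s` and variance `σ²/2` lands in the
quantization cell `[a, b)` (with extended-real endpoints). -/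
def cellProb (σ s : ℝ) (a b : EReal) : ℝ :=
  ((gaussianReal s (Real.toNNReal (σ ^ 2 / 2)))
    {x : ℝ | a ≤ (x : EReal) ∧ (x : EReal) < b}).toReal

/-- The outer product `(∇g)(∇h)ᵀ` of the gradients of `g, h : ℝᵈ → ℝ` at `κ`, written with
partial derivatives (directional derivatives along the coordinate directions). -/
def outerGrad {d : ℕ} (g h : (Fin d → ℝ) → ℝ) (κ : Fin d → ℝ) :
    Matrix (Fin d) (Fin d) ℝ :=
  Matrix.of fun j j' => fderiv ℝ g κ (Pi.single j 1) * fderiv ℝ h κ (Pi.single j' 1)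

/-- The probability of observing the outcome indexed by the cells `ρ` (one pair of cells per
measurement: one for the quantized real part, one for the quantized imaginary part). -/
def jointProb (n m K L : ℕ) (σ : ℝ) (A : Fin m → Fin n → ℂ) (t : Fin (L + 1) → EReal)
    (ρ : Fin m → Fin L × Fin L) (κ : Fin (3 * K) → ℝ) : ℝ :=
  ∏ i : Fin m,
    cellProb σ (sFun n K (A i) κ) (t (ρ i).1.castSucc) (t (ρ i).1.succ) *
      cellProb σ (rFun n K (A i) κ) (t (ρ i).2.castSucc) (t (ρ i).2.succ)

/-- The Fisher information matrix `I(κ) = E[(∇ log p(y|κ))(∇ log p(y|κ))ᵀ]`, where the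
expectation over the discrete random vector `y` is the sum over all quantization outcomes,
weighted by their probabilities. -/
def FIM (n m K L : ℕ) (σ : ℝ) (A : Fin m → Fin n → ℂ) (t : Fin (L + 1) → EReal)
    (κ : Fin (3 * K) → ℝ) : Matrix (Fin (3 * K)) (Fin (3 * K)) ℝ :=
  ∑ ρ : Fin m → Fin L × Fin L,
    jointProb n m K L σ A t ρ κ •
      outerGrad (fun κ' => Real.log (jointProb n m K L σ A t ρ κ'))
        (fun κ' => Real.log (jointProb n m K L σ A t ρ κ')) κ

/-- `Γᵢ` for a mean function value `s`: the sum over the quantization cells of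
`[e^{-(t_{ℓ+1}-s)²/σ²} - e^{-(t_ℓ-s)²/σ²}]² / [Φ((t_{ℓ+1}-s)/σ) - Φ((t_ℓ-s)/σ)]`. -/
def Γq (L : ℕ) (σ : ℝ) (t : Fin (L + 1) → EReal) (s : ℝ) : ℝ :=
  ∑ ℓ : Fin L,
    (Ge σ s (t ℓ.succ) - Ge σ s (t ℓ.castSucc)) ^ 2 /
      (Φe σ s (t ℓ.succ) - Φe σ s (t ℓ.castSucc))

/-!
The outcome probability factors over the `2m` independent quantized real and imaginary parts,
and each factor is a Gaussian cell probability `P_ℓ(s) = Φ((t_{ℓ+1}-s)/σ) - Φ((t_ℓ-s)/σ)` that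
depends on `κ` only through the mean `s = sᵢ(κ)` or `rᵢ(κ)`. The score of the product is the sum
of the component scores, each centred because `∑ ℓ, P_ℓ = 1`; so the cross terms cancel and the
Fisher information is the sum of the component ones. By the chain rule a component contributes
`(∑ ℓ, P_ℓ'(s)² / P_ℓ(s)) ∇s ∇sᵀ`, and
`P_ℓ'(s) = (σ√π)⁻¹ (e^{-(t_ℓ-s)²/σ²} - e^{-(t_{ℓ+1}-s)²/σ²})` turns the sum into `Γ(s) / (πσ²)`.
-/
theorem Fin.sum_univ_succ_sub_castSucc {M : Type*} [AddCommGroup M] :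
    ∀ {n : ℕ} (f : Fin (n + 1) → M), ∑ i : Fin n, (f i.succ - f i.castSucc) = f (Fin.last n) - f 0
  | 0, f => by simp
  | n + 1, f => by
    rw [Fin.sum_univ_castSucc]
    simp only [Fin.succ_castSucc]
    rw [Fin.sum_univ_succ_sub_castSucc (fun i => f i.castSucc), Fin.succ_last, Fin.castSucc_zero]
    abel

section IndependentProduct

variable {C ι : Type*} [Fintype C] [DecidableEq C] [Fintype ι]

theorem sum_pi_prod_mul_prod (w g : C → ι → ℝ) :
    ∑ ρ : C → ι, (∏ c, w c (ρ c)) * ∏ c, g c (ρ c) = ∏ c, ∑ ℓ, w c ℓ * g c ℓ := by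
  simp_rw [Fintype.prod_sum, ← prod_mul_distrib]

variable {w : C → ι → ℝ}

theorem sum_pi_prod_mul_apply (hw : ∀ c, ∑ ℓ, w c ℓ = 1) (c : C) (F : ι → ℝ) :
    ∑ ρ : C → ι, (∏ x, w x (ρ x)) * F (ρ c) = ∑ ℓ, w c ℓ * F ℓ := by
  have h := sum_pi_prod_mul_prod w fun x ℓ => if x = c then F ℓ else 1
  simp only [Fintype.prod_ite_eq', mul_ite, mul_one] at h
  rw [h, Fintype.prod_eq_single c fun x hx => by simp [hx, hw]]
  simp

theorem sum_pi_prod_mul_apply_mul_apply (hw : ∀ c, ∑ ℓ, w c ℓ = 1) {c c' : C} (hc : c ≠ c')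
    (F G : ι → ℝ) :
    ∑ ρ : C → ι, (∏ x, w x (ρ x)) * (F (ρ c) * G (ρ c')) =
      (∑ ℓ, w c ℓ * F ℓ) * ∑ ℓ, w c' ℓ * G ℓ := by
  have h := sum_pi_prod_mul_prod w fun x ℓ =>
    (if x = c then F ℓ else 1) * (if x = c' then G ℓ else 1)
  simp only [prod_mul_distrib, Fintype.prod_ite_eq'] at h
  rw [h, Fintype.prod_eq_mul c c' hc fun x hx => by simp [hx.1, hx.2, hw]]
  simp [hc, hc.symm]

theorem sum_pi_prod_mul_sum_mul_sum (hw : ∀ c, ∑ ℓ, w c ℓ = 1) {X Y : C → ι → ℝ}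
    (hX : ∀ c, ∑ ℓ, w c ℓ * X c ℓ = 0) :
    ∑ ρ : C → ι, (∏ c, w c (ρ c)) * ((∑ c, X c (ρ c)) * ∑ c, Y c (ρ c)) =
      ∑ c, ∑ ℓ, w c ℓ * (X c ℓ * Y c ℓ) := by
  simp_rw [sum_mul_sum, mul_sum]
  rw [sum_comm]
  refine sum_congr rfl fun c _ => ?_
  rw [sum_comm, sum_eq_single c (fun c' _ hc' => ?_) (by simp)]
  · exact sum_pi_prod_mul_apply hw c fun ℓ => X c ℓ * Y c ℓ
  · rw [sum_pi_prod_mul_apply_mul_apply hw hc'.symm, hX, zero_mul]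

end IndependentProduct

section FisherInformation

variable {d : ℕ}

def fisherInfo {ι : Type*} [Fintype ι] (p : ι → (Fin d → ℝ) → ℝ) (κ : Fin d → ℝ) :
    Matrix (Fin d) (Fin d) ℝ :=
  ∑ y, p y κ • outerGrad (fun κ' => Real.log (p y κ')) (fun κ' => Real.log (p y κ')) κ

theorem fisherInfo_comp_equiv {ι ι' : Type*} [Fintype ι] [Fintype ι'] (e : ι' ≃ ι)
    (p : ι → (Fin d → ℝ) → ℝ) (κ : Fin d → ℝ) :
    fisherInfo (fun y => p (e y)) κ = fisherInfo p κ :=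
  Fintype.sum_equiv e _ _ fun _ => rfl

theorem outerGrad_comp {g : ℝ → ℝ} {g' : ℝ} {μ : (Fin d → ℝ) → ℝ} {κ : Fin d → ℝ}
    (hg : HasDerivAt g g' (μ κ)) (hμ : DifferentiableAt ℝ μ κ) :
    outerGrad (fun κ' => g (μ κ')) (fun κ' => g (μ κ')) κ = g' ^ 2 • outerGrad μ μ κ := by
  have hD : fderiv ℝ (fun κ' => g (μ κ')) κ = g' • fderiv ℝ μ κ :=
    (hg.comp_hasFDerivAt κ hμ.hasFDerivAt).fderiv
  ext j j'
  simp only [outerGrad, hD, Matrix.of_apply, Matrix.smul_apply, smul_apply, smul_eq_mul]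
  ring

theorem sum_mul_fderiv_log_eq_zero {E ι : Type*} [NormedAddCommGroup E] [NormedSpace ℝ E]
    [Fintype ι] {p : ι → E → ℝ} {κ : E} (hpos : ∀ y, 0 < p y κ)
    (hdiff : ∀ y, DifferentiableAt ℝ (p y) κ) (hsum : ∀ κ', ∑ y, p y κ' = 1) (v : E) :
    ∑ y, p y κ * fderiv ℝ (fun κ' => Real.log (p y κ')) κ v = 0 := by
  have hscore : ∀ y, p y κ * fderiv ℝ (fun κ' => Real.log (p y κ')) κ v = fderiv ℝ (p y) κ v :=
    fun y => by
      rw [((hdiff y).hasFDerivAt.log (hpos y).ne').fderiv, smul_apply, smul_eq_mul,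
        mul_inv_cancel_left₀ (hpos y).ne']
  have htotal : ∑ y, fderiv ℝ (p y) κ = 0 := by
    rw [← fderiv_fun_sum fun y _ => hdiff y, funext hsum, fderiv_const_apply]
  simp only [hscore, ← _root_.sum_apply, htotal, zero_apply]

theorem fisherInfo_pi {C ι : Type*} [Fintype C] [DecidableEq C] [Fintype ι]
    {q : C → ι → (Fin d → ℝ) → ℝ} {κ : Fin d → ℝ} (hpos : ∀ c y κ', 0 < q c y κ')
    (hdiff : ∀ c y, DifferentiableAt ℝ (q c y) κ) (hsum : ∀ c κ', ∑ y, q c y κ' = 1) :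
    fisherInfo (fun (ρ : C → ι) κ' => ∏ c, q c (ρ c) κ') κ = ∑ c, fisherInfo (q c) κ := by
  have hscore : ∀ ρ : C → ι, fderiv ℝ (fun κ' => Real.log (∏ c, q c (ρ c) κ')) κ =
      ∑ c, fderiv ℝ (fun κ' => Real.log (q c (ρ c) κ')) κ := fun ρ => by
    simp_rw [Real.log_prod fun c _ => (hpos c (ρ c) _).ne']
    exact fderiv_fun_sum fun c _ => (hdiff c (ρ c)).log (hpos c (ρ c) κ).ne'
  ext j j'
  simp only [fisherInfo, outerGrad, hscore, Matrix.sum_apply, Matrix.smul_apply,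
    Matrix.of_apply, _root_.sum_apply, smul_eq_mul]
  exact sum_pi_prod_mul_sum_mul_sum (hsum · κ)
    (Y := fun c y => fderiv ℝ (fun κ' => Real.log (q c y κ')) κ (Pi.single j' 1))
    fun c => sum_mul_fderiv_log_eq_zero (hpos c · κ) (hdiff c) (hsum c) (Pi.single j 1)

theorem fisherInfo_comp {ι : Type*} [Fintype ι] {P : ι → ℝ → ℝ} {P' : ι → ℝ}
    {μ : (Fin d → ℝ) → ℝ} {κ : Fin d → ℝ} (hP : ∀ y, HasDerivAt (P y) (P' y) (μ κ))
    (hpos : ∀ y, 0 < P y (μ κ)) (hμ : DifferentiableAt ℝ μ κ) :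
    fisherInfo (fun y κ' => P y (μ κ')) κ = (∑ y, P' y ^ 2 / P y (μ κ)) • outerGrad μ μ κ := by
  rw [fisherInfo, sum_smul]
  refine sum_congr rfl fun y _ => ?_
  rw [outerGrad_comp ((hP y).log (hpos y).ne') hμ, smul_smul]
  congr 1
  field_simp

end FisherInformation

section GaussianCells

variable {σ : ℝ}

theorem gaussianPDFReal_half_sq (hσ : 0 < σ) (s x : ℝ) :
    gaussianPDFReal s (σ ^ 2 / 2).toNNReal x =
      (σ * √π)⁻¹ * Real.exp (-(x - s) ^ 2 / σ ^ 2) := by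
  rw [gaussianPDFReal, Real.coe_toNNReal _ (by positivity),
    show 2 * π * (σ ^ 2 / 2) = π * σ ^ 2 by ring, show 2 * (σ ^ 2 / 2) = σ ^ 2 by ring,
    Real.sqrt_mul Real.pi_pos.le, Real.sqrt_sq hσ.le, neg_div]
  ring

theorem hasDerivAt_Φq (u : ℝ) : HasDerivAt Φq ((√π)⁻¹ * Real.exp (-u ^ 2)) u := by
  have hc : Continuous fun t : ℝ => Real.exp (-t ^ 2) := by fun_prop
  exact (intervalIntegral.integral_hasDerivAt_right (hc.intervalIntegrable 0 u)
    hc.aestronglyMeasurable.stronglyMeasurableAtFilter hc.continuousAt).const_mul _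

theorem hasDerivAt_Φq_div_const (s u : ℝ) :
    HasDerivAt (fun u => Φq ((u - s) / σ)) ((σ * √π)⁻¹ * Real.exp (-(u - s) ^ 2 / σ ^ 2)) u := by
  refine ((hasDerivAt_Φq ((u - s) / σ)).comp u
    (((hasDerivAt_id u).sub_const s).div_const σ)).congr_deriv ?_
  rw [div_pow, neg_div]
  ring

theorem tendsto_Φq_atBot : Filter.Tendsto Φq Filter.atBot (nhds (-(1 / 2))) := by
  have hint : Integrable fun t : ℝ => Real.exp (-t ^ 2) := by
    simpa using integrable_exp_neg_mul_sq (b := 1) one_pos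
  have hIic : ∫ t in Set.Iic (0 : ℝ), Real.exp (-t ^ 2) = √π / 2 := by
    have hsplit := intervalIntegral.integral_Iic_add_Ioi (b := (0 : ℝ)) hint.integrableOn
      hint.integrableOn
    have hIoi : ∫ t in Set.Ioi (0 : ℝ), Real.exp (-t ^ 2) = √π / 2 := by
      simpa using integral_gaussian_Ioi 1
    have hR : ∫ t : ℝ, Real.exp (-t ^ 2) = √π := by simpa using integral_gaussian 1
    linarith
  have hlim := ((intervalIntegral_tendsto_integral_Iic 0 hint.integrableOn
    Filter.tendsto_id).neg).const_mul (√π)⁻¹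
  have hsqrt : √π ≠ 0 := (Real.sqrt_pos.2 Real.pi_pos).ne'
  rw [hIic, show (√π)⁻¹ * -(√π / 2) = -(1 / 2) by field_simp] at hlim
  refine hlim.congr fun u => ?_
  rw [Φq, ← intervalIntegral.integral_symm]
  rfl

theorem gaussianReal_Iio_toReal (hσ : 0 < σ) (s b : ℝ) :
    (gaussianReal s (σ ^ 2 / 2).toNNReal (Set.Iio b)).toReal = Φq ((b - s) / σ) + 1 / 2 := by
  have hv : (σ ^ 2 / 2).toNNReal ≠ 0 := (Real.toNNReal_pos.mpr (by positivity)).ne'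
  have hlim : Filter.Tendsto (fun u => Φq ((u - s) / σ)) Filter.atBot (nhds (-(1 / 2))) :=
    tendsto_Φq_atBot.comp ((Filter.tendsto_atBot_add_const_right _ (-s)
      Filter.tendsto_id).atBot_div_const hσ)
  rw [gaussianReal_apply_eq_integral _ hv, ENNReal.toReal_ofReal
      (setIntegral_nonneg measurableSet_Iio fun x _ => gaussianPDFReal_nonneg _ _ x),
    ← integral_Iic_eq_integral_Iio, integral_Iic_of_hasDerivAt_of_tendsto'
      (fun u _ => gaussianPDFReal_half_sq hσ s u ▸ hasDerivAt_Φq_div_const s u)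
      (integrable_gaussianPDFReal _ _).integrableOn hlim]
  ring

theorem gaussianReal_lt_toReal (hσ : 0 < σ) (s : ℝ) (u : EReal) :
    (gaussianReal s (σ ^ 2 / 2).toNNReal {x : ℝ | (x : EReal) < u}).toReal = Φe σ s u + 1 / 2 := by
  induction u using EReal.rec with
  | bot => simp [Φe]
  | coe b =>
    rw [show {x : ℝ | (x : EReal) < b} = Set.Iio b by ext; simp, gaussianReal_Iio_toReal hσ]
    simp [Φe]
  | top => simp [Φe]; norm_num

theorem cellProb_eq_sub (hσ : 0 < σ) (s : ℝ) {a b : EReal} (hab : a ≤ b) :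
    cellProb σ s a b = Φe σ s b - Φe σ s a := by
  have hcell : {x : ℝ | a ≤ (x : EReal) ∧ (x : EReal) < b} =
      {x : ℝ | (x : EReal) < b} \ {x : ℝ | (x : EReal) < a} := by
    ext x
    simp only [Set.mem_ofPred_eq, Set.mem_sdiff, not_lt]
    tauto
  rw [cellProb, ← measureReal_def, hcell, measureReal_sdiff
      (show {x : ℝ | (x : EReal) < a} ⊆ {x : ℝ | (x : EReal) < b} from fun x hx => hx.trans_le hab)
      (measurable_coe_real_ereal measurableSet_Iio), measureReal_def, measureReal_def,
    gaussianReal_lt_toReal hσ, gaussianReal_lt_toReal hσ]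
  ring

theorem cellProb_pos (hσ : 0 < σ) (s : ℝ) {a b : EReal} (hab : a < b) :
    0 < cellProb σ s a b := by
  obtain ⟨x, hax, hxb⟩ := EReal.lt_iff_exists_real_btwn.1 hab
  have hopen : IsOpen {x : ℝ | a < (x : EReal) ∧ (x : EReal) < b} :=
    isOpen_Ioo.preimage continuous_coe_real_ereal
  have hsub : {x : ℝ | a < (x : EReal) ∧ (x : EReal) < b} ⊆
      {x : ℝ | a ≤ (x : EReal) ∧ (x : EReal) < b} := fun y hy => ⟨hy.1.le, hy.2⟩
  have hvol : volume {x : ℝ | a ≤ (x : EReal) ∧ (x : EReal) < b} ≠ 0 := fun h =>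
    (hopen.measure_pos volume ⟨x, hax, hxb⟩).ne' (measure_mono_null hsub h)
  exact ENNReal.toReal_pos (fun h => hvol (gaussianReal_absolutelyContinuous' s
    (Real.toNNReal_pos.mpr (by positivity)).ne' h)) (measure_ne_top _ _)

theorem sum_cellProb (hσ : 0 < σ) {L : ℕ} {t : Fin (L + 1) → EReal} (ht : Monotone t)
    (ht0 : t 0 = ⊥) (htL : t (Fin.last L) = ⊤) (s : ℝ) :
    ∑ ℓ : Fin L, cellProb σ s (t ℓ.castSucc) (t ℓ.succ) = 1 := by
  simp_rw [cellProb_eq_sub hσ s (ht (Fin.castSucc_le_succ _))]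
  rw [Fin.sum_univ_succ_sub_castSucc (fun i => Φe σ s (t i)), htL, ht0]
  norm_num [Φe]

theorem hasDerivAt_Φe (u : EReal) (s : ℝ) :
    HasDerivAt (fun s => Φe σ s u) (-((σ * √π)⁻¹ * Ge σ s u)) s := by
  induction u using EReal.rec with
  | bot => simpa [Φe, Ge] using hasDerivAt_const s (-(1 / 2 : ℝ))
  | coe x =>
    simp only [Φe, Ge, EReal.coe_ne_bot, EReal.coe_ne_top, or_self, if_false,
      EReal.toReal_coe]
    refine ((hasDerivAt_Φq ((x - s) / σ)).comp s
      (((hasDerivAt_id s).const_sub x).div_const σ)).congr_deriv ?_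
    simp only [div_pow, neg_div]
    ring
  | top => simpa [Φe, Ge] using hasDerivAt_const s (1 / 2 : ℝ)

theorem hasDerivAt_cellProb (hσ : 0 < σ) {a b : EReal} (hab : a ≤ b) (s : ℝ) :
    HasDerivAt (fun s => cellProb σ s a b) ((σ * √π)⁻¹ * (Ge σ s a - Ge σ s b)) s := by
  simp_rw [cellProb_eq_sub hσ _ hab]
  exact ((hasDerivAt_Φe b s).sub (hasDerivAt_Φe a s)).congr_deriv (by ring)

theorem fisherInfo_cellProb (hσ : 0 < σ) {L d : ℕ} {t : Fin (L + 1) → EReal} (ht : StrictMono t)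
    {μ : (Fin d → ℝ) → ℝ} {κ : Fin d → ℝ} (hμ : DifferentiableAt ℝ μ κ) :
    fisherInfo (fun (ℓ : Fin L) κ' => cellProb σ (μ κ') (t ℓ.castSucc) (t ℓ.succ)) κ =
      ((π * σ ^ 2)⁻¹ * Γq L σ t (μ κ)) • outerGrad μ μ κ := by
  have hcell : ∀ ℓ : Fin L, t ℓ.castSucc < t ℓ.succ := fun ℓ => ht Fin.castSucc_lt_succ
  rw [fisherInfo_comp (fun ℓ => hasDerivAt_cellProb hσ (hcell ℓ).le _)
    (fun ℓ => cellProb_pos hσ _ (hcell ℓ)) hμ, Γq, mul_sum]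
  congr 1
  refine sum_congr rfl fun ℓ _ => ?_
  have hsq : (σ * √π)⁻¹ ^ 2 = (π * σ ^ 2)⁻¹ := by
    rw [inv_pow, mul_pow, Real.sq_sqrt Real.pi_pos.le, mul_comm]
  rw [cellProb_eq_sub hσ _ (hcell ℓ).le, mul_pow, hsq]
  ring

end GaussianCells

section Model

variable {n m K : ℕ}

theorem differentiable_dotH_xstar (a : Fin n → ℂ) :
    Differentiable ℝ fun κ : Fin (3 * K) → ℝ => dotH a (xstar n K κ) := by
  unfold dotH xstar vAtom
  fun_prop

theorem differentiable_sFun (a : Fin n → ℂ) : Differentiable ℝ (sFun n K a) :=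
  Complex.reCLM.differentiable.comp (differentiable_dotH_xstar a)

theorem differentiable_rFun (a : Fin n → ℂ) : Differentiable ℝ (rFun n K a) :=
  Complex.imCLM.differentiable.comp (differentiable_dotH_xstar a)

/-- `(i, false)` indexes the real and `(i, true)` the imaginary part of the `i`-th measurement,
matching `Equiv.boolArrowEquivProd`. -/
def measurementMean (n K : ℕ) (A : Fin m → Fin n → ℂ) :
    Fin m × Bool → (Fin (3 * K) → ℝ) → ℝ
  | (i, false) => sFun n K (A i)
  | (i, true) => rFun n K (A i)

theorem differentiable_measurementMean (A : Fin m → Fin n → ℂ) :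
    ∀ c, Differentiable ℝ (measurementMean n K A c)
  | (i, false) => differentiable_sFun (A i)
  | (i, true) => differentiable_rFun (A i)

def outcomeEquiv (m L : ℕ) : (Fin m × Bool → Fin L) ≃ (Fin m → Fin L × Fin L) :=
  (Equiv.curry _ _ _).trans (Equiv.piCongrRight fun _ => Equiv.boolArrowEquivProd _)

theorem jointProb_outcomeEquiv {L : ℕ} (σ : ℝ) (A : Fin m → Fin n → ℂ)
    (t : Fin (L + 1) → EReal) (τ : Fin m × Bool → Fin L) (κ : Fin (3 * K) → ℝ) :
    jointProb n m K L σ A t (outcomeEquiv m L τ) κ =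
      ∏ c, cellProb σ (measurementMean n K A c κ) (t (τ c).castSucc) (t (τ c).succ) := by
  rw [Fintype.prod_prod_type]
  refine prod_congr rfl fun i _ => ?_
  rw [Fintype.prod_bool, mul_comm]
  rfl

end Model

theorem fisher_information_general_quantizer_general
    (n m K L : ℕ)
    (σ : ℝ) (hσ : 0 < σ)
    (A : Fin m → Fin n → ℂ)
    (t : Fin (L + 1) → EReal) (ht : StrictMono t)
    (ht0 : t 0 = ⊥) (htL : t (Fin.last L) = ⊤)
    (κ : Fin (3 * K) → ℝ) :
    FIM n m K L σ A t κ =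
      (Real.pi * σ ^ 2)⁻¹ •
        ∑ i : Fin m,
          (Γq L σ t (sFun n K (A i) κ) •
              outerGrad (sFun n K (A i)) (sFun n K (A i)) κ +
            Γq L σ t (rFun n K (A i) κ) •
              outerGrad (rFun n K (A i)) (rFun n K (A i)) κ) := by
  set μ := measurementMean n K A
  have hcell : ∀ ℓ : Fin L, t ℓ.castSucc < t ℓ.succ := fun ℓ => ht Fin.castSucc_lt_succ
  calc FIM n m K L σ A t κ
      = fisherInfo (fun (τ : Fin m × Bool → Fin L) κ' =>
          jointProb n m K L σ A t (outcomeEquiv m L τ) κ') κ :=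
        (fisherInfo_comp_equiv _ _ _).symm
    _ = fisherInfo (fun (τ : Fin m × Bool → Fin L) κ' =>
          ∏ c, cellProb σ (μ c κ') (t (τ c).castSucc) (t (τ c).succ)) κ := by
        simp only [jointProb_outcomeEquiv, μ]
    _ = ∑ c, ((π * σ ^ 2)⁻¹ * Γq L σ t (μ c κ)) • outerGrad (μ c) (μ c) κ := by
        rw [fisherInfo_pi (fun c ℓ κ' => cellProb_pos hσ _ (hcell ℓ))
          (fun c ℓ => ((hasDerivAt_cellProb hσ (hcell ℓ).le _).differentiableAt.comp κ
            (differentiable_measurementMean A c κ)))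
          (fun c κ' => sum_cellProb hσ ht.monotone ht0 htL (μ c κ'))]
        exact sum_congr rfl fun c _ =>
          fisherInfo_cellProb hσ ht (differentiable_measurementMean A c κ)
    _ = _ := by
        simp only [Fintype.sum_prod_type, Fintype.sum_bool, smul_sum, smul_add, mul_smul]
        exact sum_congr rfl fun i _ => add_comm _ _

/-- Theorem 1 of the paper: in the quantized spectral compressed sensing model
with a general quantizer and `σ > 0`, the Fisher information matrix for estimating the
parameter vector `κ ∈ ℝ^{3K}` equals
`(1/(πσ²)) ∑ᵢ [Γᵢᴿ(κ) (∂sᵢ/∂κ)(∂sᵢ/∂κ)ᵀ + Γᵢᴵ(κ) (∂rᵢ/∂κ)(∂rᵢ/∂κ)ᵀ]`. -/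
theorem fisher_information_general_quantizer
    (n m K L : ℕ) (hm : 0 < m) (hK : 0 < K) (hL : 0 < L)
    (σ : ℝ) (hσ : 0 < σ)
    (A : Fin m → Fin n → ℂ)
    (t : Fin (L + 1) → EReal) (ht : StrictMono t)
    (ht0 : t 0 = ⊥) (htL : t (Fin.last L) = ⊤)
    (κ : Fin (3 * K) → ℝ) :
    FIM n m K L σ A t κ =
      (Real.pi * σ ^ 2)⁻¹ •
        ∑ i : Fin m,
          (Γq L σ t (sFun n K (A i) κ) •
              outerGrad (sFun n K (A i)) (sFun n K (A i)) κ +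
            Γq L σ t (rFun n K (A i) κ) •
              outerGrad (rFun n K (A i)) (rFun n K (A i)) κ) :=
  fisher_information_general_quantizer_general n m K L σ hσ A t ht ht0 htL κ

end
end

section
/- For every Q in C^{n x T}, the supremum of Re Tr(Q^H X) over all X in C^{n x T} with ||X||_A <= 1 equals the supremum over f in [0,1) of the Euclidean norm ||Q^H v(f)||_2. That is, the dual of the multiple-vector atomic norm satisfies ||Q||_A* = sup_{f in [0,1)} ||Q^H v(f)||_2. -/
open scoped BigOperators Real
open Finset

noncomputable section

/-- The Euclidean (`ℓ₂`) norm on `ℂⁿ`. -/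
def l2norm {n : ℕ} (x : Fin n → ℂ) : ℝ := Real.sqrt (∑ k, Complex.normSq (x k))

/-- The atomic norm `‖x‖_𝒜 = inf { ∑ₖ |αₖ| : x = ∑ₖ αₖ v(fₖ), fₖ ∈ [0,1) }`. -/
def atomicNorm {n : ℕ} (x : Fin n → ℂ) : ℝ :=
  sInf { r : ℝ | ∃ (N : ℕ) (α : Fin N → ℂ) (f : Fin N → ℝ),
    (∀ k, f k ∈ Set.Ico (0:ℝ) 1) ∧ x = ∑ k, α k • vAtom n (f k) ∧
      r = ∑ k, ‖α k‖ }

/-- The dual atomic norm `‖q‖_𝒜^* = sup_{f ∈ [0,1)} |qᴴ v(f)|`. -/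
def dualAtomicNorm {n : ℕ} (q : Fin n → ℂ) : ℝ :=
  ⨆ f : Set.Ico (0:ℝ) 1, ‖dotH q (vAtom n (f : ℝ))‖


/-- The multiple-vector atomic norm
`‖X‖_𝒜 = inf { ∑ₖ |cₖ| : X = ∑ₖ cₖ v(fₖ) bₖ, fₖ ∈ [0,1), ‖bₖ‖₂ = 1 }` on `ℂ^{n×T}`. -/
def mvAtomicNorm {n T : ℕ} (X : Matrix (Fin n) (Fin T) ℂ) : ℝ :=
  sInf { r : ℝ | ∃ (N : ℕ) (c : Fin N → ℂ) (f : Fin N → ℝ) (b : Fin N → Fin T → ℂ),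
    (∀ k, f k ∈ Set.Ico (0:ℝ) 1) ∧ (∀ k, l2norm (b k) = 1) ∧
      X = ∑ k, c k • Matrix.of (fun i t => vAtom n (f k) i * b k t) ∧
      r = ∑ k, ‖c k‖ }

/-!
Each atom `v(f) bᵀ` with `‖b‖₂ = 1` satisfies `|Tr(Qᴴ v(f) bᵀ)| = |(Qᴴ v(f)) ⬝ b| ≤ ‖Qᴴ v(f)‖₂`
by Cauchy–Schwarz, so by the triangle inequality `Re Tr(Qᴴ X) ≤ ‖X‖_𝒜 · sup_f ‖Qᴴ v(f)‖₂`.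
Conversely, the single atom `v(f) bᵀ` with `b` the normalised conjugate of `Qᴴ v(f)` lies in the
unit ball and attains `‖Qᴴ v(f)‖₂`. Passing the first bound to the infimum defining `‖X‖_𝒜`
needs every `X` to have some atomic decomposition: the atoms at the frequencies `k / n` are the
rows of a Vandermonde matrix in the distinct `n`-th roots of unity, hence a basis of `ℂⁿ`.
-/

open Matrix

section L2Norm

variable {n : ℕ}

lemma l2norm_eq_norm (x : Fin n → ℂ) : l2norm x = ‖WithLp.toLp 2 x‖ := by
  simp [l2norm, EuclideanSpace.norm_eq, Complex.sq_norm]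

lemma l2norm_nonneg (x : Fin n → ℂ) : 0 ≤ l2norm x := Real.sqrt_nonneg _

lemma l2norm_eq_zero {x : Fin n → ℂ} : l2norm x = 0 ↔ x = 0 := by
  simp [l2norm_eq_norm]

lemma l2norm_smul (a : ℂ) (x : Fin n → ℂ) : l2norm (a • x) = ‖a‖ * l2norm x := by
  simp only [l2norm_eq_norm, WithLp.toLp_smul, norm_smul]

lemma l2norm_star (x : Fin n → ℂ) : l2norm (star x) = l2norm x := by
  simp [l2norm]

lemma norm_dotProduct_le_l2norm_mul (w b : Fin n → ℂ) : ‖w ⬝ᵥ b‖ ≤ l2norm w * l2norm b := by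
  have h := norm_inner_le_norm (𝕜 := ℂ) (WithLp.toLp 2 (star w)) (WithLp.toLp 2 b)
  rw [← l2norm_eq_norm, ← l2norm_eq_norm, l2norm_star] at h
  simpa [PiLp.inner_apply, dotProduct, mul_comm] using h

lemma dotProduct_star_self (w : Fin n → ℂ) : w ⬝ᵥ star w = (l2norm w : ℂ) ^ 2 := by
  have h := inner_self_eq_norm_sq_to_K (𝕜 := ℂ) (WithLp.toLp 2 w)
  simp only [PiLp.inner_apply, RCLike.inner_apply] at h
  rw [l2norm_eq_norm]
  simpa [dotProduct] using h

lemma exists_l2norm_eq_one_smul_eq (hn : 0 < n) (x : Fin n → ℂ) :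
    ∃ b : Fin n → ℂ, l2norm b = 1 ∧ (l2norm x : ℂ) • b = x := by
  by_cases hx : x = 0
  · refine ⟨Pi.single ⟨0, hn⟩ 1, by simp [l2norm_eq_norm], by simp [hx, l2norm_eq_zero.2]⟩
  have hx' : l2norm x ≠ 0 := mt l2norm_eq_zero.1 hx
  refine ⟨(l2norm x : ℂ)⁻¹ • x, ?_, ?_⟩
  · rw [l2norm_smul, norm_inv, Complex.norm_real, Real.norm_of_nonneg (l2norm_nonneg _),
      inv_mul_cancel₀ hx']
  · rw [smul_smul, mul_inv_cancel₀ (Complex.ofReal_ne_zero.2 hx'), one_smul]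

end L2Norm

lemma continuous_vAtom (n : ℕ) : Continuous (vAtom n) := by
  unfold vAtom
  fun_prop

lemma bddAbove_range_l2norm_mulVec_vAtom {m n : ℕ} (A : Matrix (Fin m) (Fin n) ℂ) :
    BddAbove (Set.range fun f : Set.Ico (0:ℝ) 1 => l2norm (A *ᵥ vAtom n f)) := by
  have hcont : Continuous fun f => l2norm (A *ᵥ vAtom n f) := by
    simp only [l2norm_eq_norm]
    have := continuous_vAtom n
    fun_prop
  refine BddAbove.mono ?_
    ((isCompact_Icc (a := (0:ℝ)) (b := 1)).bddAbove_image hcont.continuousOn)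
  rintro _ ⟨⟨f, hf⟩, rfl⟩
  exact ⟨f, Set.Ico_subset_Icc_self hf, rfl⟩

lemma Fin.val_div_mem_Ico {n : ℕ} (k : Fin n) : ((k : ℕ) / n : ℝ) ∈ Set.Ico (0:ℝ) 1 :=
  ⟨by positivity, (div_lt_one (by exact_mod_cast k.pos)).2 (by exact_mod_cast k.isLt)⟩

lemma vAtom_div_eq_pow {n : ℕ} (k i : Fin n) :
    vAtom n ((k : ℕ) / n) i = (Complex.exp (2 * π * Complex.I / n) ^ (k : ℕ)) ^ (i : ℕ) := by
  rw [vAtom, ← Complex.exp_nat_mul, ← Complex.exp_nat_mul]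
  push_cast
  ring_nf

lemma det_vAtom_div_ne_zero (n : ℕ) :
    (of fun k i : Fin n => vAtom n ((k : ℕ) / n) i).det ≠ 0 := by
  simp_rw [vAtom_div_eq_pow]
  refine det_vandermonde_ne_zero_iff.2 fun k l hkl => Fin.ext ?_
  exact (Complex.isPrimitiveRoot_exp n k.pos.ne').pow_inj k.isLt l.isLt hkl

lemma transpose_mul_eq_sum_vecMulVec {ι m p R : Type*} [Fintype ι] [NonUnitalNonAssocSemiring R]
    (A : Matrix ι m R) (B : Matrix ι p R) : Aᵀ * B = ∑ k, vecMulVec (A k) (B k) := by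
  ext i j
  simp [mul_apply, Matrix.sum_apply, vecMulVec_apply]

lemma exists_eq_sum_vecMulVec_vAtom_div {n T : ℕ} (X : Matrix (Fin n) (Fin T) ℂ) :
    ∃ B : Matrix (Fin n) (Fin T) ℂ, X = ∑ k : Fin n, vecMulVec (vAtom n ((k : ℕ) / n)) (B k) := by
  set V : Matrix (Fin n) (Fin n) ℂ := of fun k i => vAtom n ((k : ℕ) / n) i
  have hV : IsUnit Vᵀ.det := by
    rw [det_transpose]
    exact isUnit_iff_ne_zero.2 (det_vAtom_div_ne_zero n)
  refine ⟨Vᵀ⁻¹ * X, ?_⟩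
  calc X = Vᵀ * (Vᵀ⁻¹ * X) := (mul_nonsing_inv_cancel_left _ _ hV).symm
    _ = _ := transpose_mul_eq_sum_vecMulVec V _

def mvAtomicCosts {n T : ℕ} (X : Matrix (Fin n) (Fin T) ℂ) : Set ℝ :=
  { r : ℝ | ∃ (N : ℕ) (c : Fin N → ℂ) (f : Fin N → ℝ) (b : Fin N → Fin T → ℂ),
    (∀ k, f k ∈ Set.Ico (0:ℝ) 1) ∧ (∀ k, l2norm (b k) = 1) ∧
      X = ∑ k, c k • vecMulVec (vAtom n (f k)) (b k) ∧ r = ∑ k, ‖c k‖ }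

section AtomicCosts

variable {n T : ℕ}

lemma mvAtomicNorm_eq_sInf (X : Matrix (Fin n) (Fin T) ℂ) :
    mvAtomicNorm X = sInf (mvAtomicCosts X) := rfl

lemma nonneg_of_mem_mvAtomicCosts {X : Matrix (Fin n) (Fin T) ℂ} {r : ℝ}
    (hr : r ∈ mvAtomicCosts X) : 0 ≤ r := by
  obtain ⟨N, c, f, b, -, -, -, rfl⟩ := hr
  positivity

lemma mvAtomicNorm_le_of_mem {X : Matrix (Fin n) (Fin T) ℂ} {r : ℝ}
    (hr : r ∈ mvAtomicCosts X) : mvAtomicNorm X ≤ r :=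
  csInf_le ⟨0, fun _ => nonneg_of_mem_mvAtomicCosts⟩ hr

lemma zero_mem_mvAtomicCosts : (0 : ℝ) ∈ mvAtomicCosts (0 : Matrix (Fin n) (Fin T) ℂ) :=
  ⟨0, Fin.elim0, Fin.elim0, Fin.elim0, fun k => k.elim0, fun k => k.elim0, by simp, by simp⟩

lemma sum_l2norm_mem_mvAtomicCosts (hT : 0 < T) {N : ℕ} {f : Fin N → ℝ}
    (hf : ∀ k, f k ∈ Set.Ico (0:ℝ) 1) (B : Fin N → Fin T → ℂ) :
    ∑ k, l2norm (B k) ∈ mvAtomicCosts (∑ k, vecMulVec (vAtom n (f k)) (B k)) := by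
  choose b hb hbB using fun k => exists_l2norm_eq_one_smul_eq hT (B k)
  refine ⟨N, fun k => l2norm (B k), f, b, hf, hb, ?_, ?_⟩
  · simp_rw [← vecMulVec_smul, hbB]
  · simp [Real.norm_of_nonneg (l2norm_nonneg _)]

-- Essential: were `mvAtomicCosts X` empty, `sInf ∅ = 0` would put `X` in every ball.
lemma mvAtomicCosts_nonempty (X : Matrix (Fin n) (Fin T) ℂ) : (mvAtomicCosts X).Nonempty := by
  rcases Nat.eq_zero_or_pos T with rfl | hT
  · exact ⟨0, Subsingleton.elim 0 X ▸ zero_mem_mvAtomicCosts⟩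
  · obtain ⟨B, rfl⟩ := exists_eq_sum_vecMulVec_vAtom_div X
    exact ⟨_, sum_l2norm_mem_mvAtomicCosts hT Fin.val_div_mem_Ico B⟩

end AtomicCosts

section Duality

variable {n T : ℕ} {Q X : Matrix (Fin n) (Fin T) ℂ} {M : ℝ}

lemma re_trace_le_of_mem_mvAtomicCosts
    (hM : ∀ f ∈ Set.Ico (0:ℝ) 1, l2norm (Qᴴ *ᵥ vAtom n f) ≤ M) {r : ℝ}
    (hr : r ∈ mvAtomicCosts X) : (trace (Qᴴ * X)).re ≤ r * M := by
  obtain ⟨N, c, f, b, hf, hb, rfl, rfl⟩ := hr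
  have hatom : ∀ k, ‖trace (Qᴴ * (c k • vecMulVec (vAtom n (f k)) (b k)))‖ ≤ ‖c k‖ * M := by
    intro k
    rw [Matrix.mul_smul, trace_smul, mul_vecMulVec, trace_vecMulVec, norm_smul]
    gcongr
    calc _ ≤ l2norm (Qᴴ *ᵥ vAtom n (f k)) * l2norm (b k) := norm_dotProduct_le_l2norm_mul _ _
      _ ≤ M := by rw [hb k, mul_one]; exact hM _ (hf k)
  calc (trace (Qᴴ * ∑ k, c k • vecMulVec (vAtom n (f k)) (b k))).re
      ≤ ‖trace (Qᴴ * ∑ k, c k • vecMulVec (vAtom n (f k)) (b k))‖ := Complex.re_le_norm _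
    _ ≤ ∑ k, ‖trace (Qᴴ * (c k • vecMulVec (vAtom n (f k)) (b k)))‖ := by
      rw [Matrix.mul_sum, trace_sum]
      exact norm_sum_le _ _
    _ ≤ ∑ k, ‖c k‖ * M := sum_le_sum fun k _ => hatom k
    _ = (∑ k, ‖c k‖) * M := (sum_mul _ _ _).symm

lemma re_trace_le_mvAtomicNorm_mul (hM0 : 0 ≤ M)
    (hM : ∀ f ∈ Set.Ico (0:ℝ) 1, l2norm (Qᴴ *ᵥ vAtom n f) ≤ M) :
    (trace (Qᴴ * X)).re ≤ mvAtomicNorm X * M := by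
  rw [mvAtomicNorm_eq_sInf, mul_comm, ← smul_eq_mul, ← Real.sInf_smul_of_nonneg hM0]
  refine le_csInf (mvAtomicCosts_nonempty X).smul_set ?_
  rintro _ ⟨r, hr, rfl⟩
  exact (re_trace_le_of_mem_mvAtomicCosts hM hr).trans_eq (mul_comm r M)

lemma exists_mvAtomicNorm_le_one_re_trace_eq (Q : Matrix (Fin n) (Fin T) ℂ) {f : ℝ}
    (hf : f ∈ Set.Ico (0:ℝ) 1) : ∃ X : Matrix (Fin n) (Fin T) ℂ,
      mvAtomicNorm X ≤ 1 ∧ (trace (Qᴴ * X)).re = l2norm (Qᴴ *ᵥ vAtom n f) := by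
  set w := Qᴴ *ᵥ vAtom n f
  by_cases hw : l2norm w = 0
  · exact ⟨0, (mvAtomicNorm_le_of_mem zero_mem_mvAtomicCosts).trans zero_le_one, by simp [hw]⟩
  have hb : l2norm ((l2norm w : ℂ)⁻¹ • star w) = 1 := by
    rw [l2norm_smul, l2norm_star, norm_inv, Complex.norm_real,
      Real.norm_of_nonneg (l2norm_nonneg _), inv_mul_cancel₀ hw]
  refine ⟨vecMulVec (vAtom n f) ((l2norm w : ℂ)⁻¹ • star w),
    mvAtomicNorm_le_of_mem ⟨1, fun _ => 1, fun _ => f, fun _ => _, fun _ => hf, fun _ => hb,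
      by simp, by simp⟩, ?_⟩
  rw [mul_vecMulVec, trace_vecMulVec, dotProduct_smul, dotProduct_star_self, smul_eq_mul, sq,
    ← mul_assoc, inv_mul_cancel₀ (Complex.ofReal_ne_zero.2 hw), one_mul, Complex.ofReal_re]

end Duality

/-- for every `Q ∈ ℂ^{n×T}`, the supremum of `Re Tr(Qᴴ X)` over the
multiple-vector atomic norm unit ball equals `sup_{f ∈ [0,1)} ‖Qᴴ v(f)‖₂`. -/
theorem mv_dualAtomicNorm_eq_sup (n T : ℕ) (Q : Matrix (Fin n) (Fin T) ℂ) :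
    sSup ((fun X : Matrix (Fin n) (Fin T) ℂ => (Matrix.trace (Q.conjTranspose * X)).re) ''
        { X | mvAtomicNorm X ≤ 1 }) =
      ⨆ f : Set.Ico (0:ℝ) 1, l2norm (Matrix.mulVec Q.conjTranspose (vAtom n (f : ℝ))) := by
  set M := ⨆ f : Set.Ico (0:ℝ) 1, l2norm (Qᴴ *ᵥ vAtom n f)
  have hM : ∀ f ∈ Set.Ico (0:ℝ) 1, l2norm (Qᴴ *ᵥ vAtom n f) ≤ M := fun f hf =>
    le_ciSup (bddAbove_range_l2norm_mulVec_vAtom Qᴴ) ⟨f, hf⟩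
  have hM0 : 0 ≤ M := Real.iSup_nonneg fun _ => l2norm_nonneg _
  have hball : ∀ X, mvAtomicNorm X ≤ 1 → (trace (Qᴴ * X)).re ≤ M := fun X hX =>
    (re_trace_le_mvAtomicNorm_mul hM0 hM).trans (mul_le_of_le_one_left hM0 hX)
  refine le_antisymm (Real.sSup_le (by rintro _ ⟨X, hX, rfl⟩; exact hball X hX) hM0)
    (ciSup_le fun f => ?_)
  obtain ⟨X, hX, hXf⟩ := exists_mvAtomicNorm_le_one_re_trace_eq Q f.2
  exact le_csSup ⟨M, by rintro _ ⟨Y, hY, rfl⟩; exact hball Y hY⟩ ⟨X, hX, hXf⟩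

end
end

section
/- Let s in C^n, tau > 0, and let x_hat be a minimizer of (1/2)||x - s||_2^2 + tau*||x||_A over x in C^n. Let x* in C^n, lambda > 0, and set w = s - lambda*x* and e = lambda*x* - x_hat. If tau >= eta * ||w||_A* for some constant eta >= 1, then ||e||_A* <= (1 + 1/eta) * tau <= 2*tau. -/
open scoped BigOperators Real
open Finset

noncomputable section

/-!
Perturbing `x̂` along a single atom, `x = x̂ + u • v(f)` with `u = t · conj ⟨s - x̂, v(f)⟩` and
`t ↓ 0`, raises the atomic norm by at most `|u|` and lowers `½‖x - s‖₂²` by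
`t |⟨s - x̂, v(f)⟩|²` to first order, so optimality of `x̂` forces `|⟨s - x̂, v(f)⟩| ≤ τ` for
every `f`, i.e. `‖s - x̂‖_𝒜^* ≤ τ`. Since `e = (s - x̂) - w`, the triangle inequality for the
dual norm gives `‖e‖_𝒜^* ≤ τ + τ / η`.
-/

lemma norm_vAtom_apply (n : ℕ) (f : ℝ) (k : Fin n) : ‖vAtom n f k‖ = 1 := by
  rw [vAtom, Complex.norm_exp]
  simp

open Matrix in
lemma exists_eq_sum_smul_vAtom {n : ℕ} (x : Fin n → ℂ) :
    ∃ α : Fin n → ℂ, x = ∑ k, α k • vAtom n ((k : ℕ) / n) := by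
  rcases Nat.eq_zero_or_pos n with rfl | hn
  · exact ⟨0, Subsingleton.elim _ _⟩
  set ζ := Complex.exp (2 * π * Complex.I / n)
  have hζ : IsPrimitiveRoot ζ n := Complex.isPrimitiveRoot_exp n hn.ne'
  set V := vandermonde fun k : Fin n => ζ ^ (k : ℕ) with hV_def
  have hV : IsUnit V.det := isUnit_iff_ne_zero.mpr <| det_vandermonde_ne_zero_iff.mpr
    fun a b hab => Fin.ext (hζ.pow_inj a.isLt b.isLt hab)
  have hVk : ∀ k j : Fin n, V k j = vAtom n ((k : ℕ) / n) j := by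
    intro k j
    rw [hV_def, vandermonde_apply, ← pow_mul, ← Complex.exp_nat_mul, vAtom]
    congr 1
    push_cast
    field_simp
  refine ⟨x ᵥ* V⁻¹, funext fun j => ?_⟩
  have hx : (x ᵥ* V⁻¹) ᵥ* V = x := by
    rw [vecMul_vecMul, nonsing_inv_mul _ hV, vecMul_one]
  conv_lhs => rw [← hx]
  simp [vecMul, dotProduct, hVk]

def atomicCosts {n : ℕ} (x : Fin n → ℂ) : Set ℝ :=
  { r : ℝ | ∃ (N : ℕ) (α : Fin N → ℂ) (f : Fin N → ℝ),
    (∀ k, f k ∈ Set.Ico (0:ℝ) 1) ∧ x = ∑ k, α k • vAtom n (f k) ∧ r = ∑ k, ‖α k‖ }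

lemma atomicNorm_eq_sInf {n : ℕ} (x : Fin n → ℂ) : atomicNorm x = sInf (atomicCosts x) := rfl

lemma atomicCosts_nonempty {n : ℕ} (x : Fin n → ℂ) : (atomicCosts x).Nonempty := by
  obtain ⟨α, hx⟩ := exists_eq_sum_smul_vAtom x
  refine ⟨_, n, α, fun k => (k : ℕ) / n, fun k => ⟨by positivity, ?_⟩, hx, rfl⟩
  rw [div_lt_one (by exact_mod_cast k.pos)]
  exact_mod_cast k.isLt

lemma atomicCosts_bddBelow {n : ℕ} (x : Fin n → ℂ) : BddBelow (atomicCosts x) := by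
  refine ⟨0, ?_⟩
  rintro r ⟨N, α, f, -, -, rfl⟩
  positivity

lemma atomicNorm_add_smul_vAtom_le {n : ℕ} (x : Fin n → ℂ) (c : ℂ) {f : ℝ}
    (hf : f ∈ Set.Ico (0:ℝ) 1) : atomicNorm (x + c • vAtom n f) ≤ atomicNorm x + ‖c‖ := by
  rw [atomicNorm_eq_sInf, atomicNorm_eq_sInf, ← sub_le_iff_le_add]
  refine le_csInf (atomicCosts_nonempty x) ?_
  rintro _ ⟨N, α, g, hg, rfl, rfl⟩
  rw [sub_le_iff_le_add]
  refine csInf_le (atomicCosts_bddBelow _) ⟨N + 1, Fin.cons c α, Fin.cons f g,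
    Fin.cases hf hg, ?_, ?_⟩ <;> simp [Fin.sum_univ_succ, add_comm]

open Filter Topology in
lemma le_of_forall_pos_le_add_mul {a b c : ℝ} (h : ∀ t > 0, a ≤ b + t * c) : a ≤ b := by
  have hlim : Tendsto (fun t : ℝ => b + t * c) (𝓝[>] 0) (𝓝 b) := by
    have hcont : Continuous fun t : ℝ => b + t * c := by fun_prop
    simpa using (hcont.tendsto 0).mono_left nhdsWithin_le_nhds
  exact ge_of_tendsto hlim (eventually_nhdsWithin_of_forall h)

lemma norm_inner_sub_le_of_minimizes {𝕜 E : Type*} [RCLike 𝕜] [NormedAddCommGroup E]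
    [InnerProductSpace 𝕜 E] (N : E → ℝ) {s xh v : E} {τ : ℝ} (hτ : 0 ≤ τ)
    (hN : ∀ u : 𝕜, N (xh + u • v) ≤ N xh + ‖u‖)
    (hmin : ∀ x, 1 / 2 * ‖xh - s‖ ^ 2 + τ * N xh ≤ 1 / 2 * ‖x - s‖ ^ 2 + τ * N x) :
    ‖inner 𝕜 (s - xh) v‖ ≤ τ := by
  set D := inner 𝕜 (s - xh) v
  have hdescent : ∀ t > 0, ‖D‖ ^ 2 ≤ τ * ‖D‖ + t * (‖D‖ ^ 2 * ‖v‖ ^ 2 / 2) := by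
    intro t ht
    set u : 𝕜 := (t : 𝕜) * starRingEnd 𝕜 D
    have hu : ‖u‖ = t * ‖D‖ := by simp [u, abs_of_pos ht]
    have hre : RCLike.re (inner 𝕜 (xh - s) (u • v)) = -(t * ‖D‖ ^ 2) := by
      rw [inner_smul_right, ← neg_sub, inner_neg_left, mul_neg, mul_assoc, RCLike.conj_mul,
        ← RCLike.ofReal_pow, map_neg, RCLike.re_ofReal_mul, RCLike.ofReal_re]
    have hsq : ‖xh + u • v - s‖ ^ 2 =
        ‖xh - s‖ ^ 2 - 2 * (t * ‖D‖ ^ 2) + (t * ‖D‖) ^ 2 * ‖v‖ ^ 2 := by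
      rw [add_sub_right_comm, norm_add_sq (𝕜 := 𝕜), hre, norm_smul, hu]
      ring
    have hmin_u := hmin (xh + u • v)
    have hN_u := hN u
    rw [hsq] at hmin_u
    rw [hu] at hN_u
    nlinarith
  have hD : ‖D‖ ^ 2 ≤ τ * ‖D‖ := le_of_forall_pos_le_add_mul hdescent
  nlinarith [norm_nonneg D]

lemma l2norm_eq_norm_toLp {n : ℕ} (x : Fin n → ℂ) :
    l2norm x = ‖(WithLp.toLp 2 x : EuclideanSpace ℂ (Fin n))‖ := by
  simp [l2norm, EuclideanSpace.norm_eq, Complex.normSq_eq_norm_sq]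

lemma dotH_eq_inner {n : ℕ} (a x : Fin n → ℂ) :
    dotH a x = inner ℂ (WithLp.toLp 2 a : EuclideanSpace ℂ (Fin n)) (WithLp.toLp 2 x) := by
  simp [dotH, PiLp.inner_apply, mul_comm]

lemma norm_dotH_sub_vAtom_le_of_minimizes {n : ℕ} (s xh : Fin n → ℂ) {τ : ℝ} (hτ : 0 ≤ τ)
    (hmin : ∀ x : Fin n → ℂ, 1 / 2 * l2norm (xh - s) ^ 2 + τ * atomicNorm xh ≤
      1 / 2 * l2norm (x - s) ^ 2 + τ * atomicNorm x)
    {f : ℝ} (hf : f ∈ Set.Ico (0:ℝ) 1) : ‖dotH (s - xh) (vAtom n f)‖ ≤ τ := by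
  rw [dotH_eq_inner, WithLp.toLp_sub]
  refine norm_inner_sub_le_of_minimizes (fun x => atomicNorm x.ofLp) hτ
    (fun u => ?_) (fun x => ?_)
  · simpa using atomicNorm_add_smul_vAtom_le xh u hf
  · simpa [l2norm_eq_norm_toLp] using hmin x.ofLp

lemma norm_dotH_vAtom_le {n : ℕ} (q : Fin n → ℂ) (f : ℝ) :
    ‖dotH q (vAtom n f)‖ ≤ ∑ k, ‖q k‖ :=
  (norm_sum_le _ _).trans_eq <| by simp [norm_vAtom_apply]

lemma dualAtomicNorm_bddAbove {n : ℕ} (q : Fin n → ℂ) :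
    BddAbove (Set.range fun f : Set.Ico (0:ℝ) 1 => ‖dotH q (vAtom n f)‖) :=
  ⟨∑ k, ‖q k‖, Set.forall_mem_range.mpr fun f => norm_dotH_vAtom_le q f⟩

lemma norm_dotH_vAtom_le_dualAtomicNorm {n : ℕ} (q : Fin n → ℂ) {f : ℝ}
    (hf : f ∈ Set.Ico (0:ℝ) 1) : ‖dotH q (vAtom n f)‖ ≤ dualAtomicNorm q :=
  le_ciSup (dualAtomicNorm_bddAbove q) ⟨f, hf⟩

lemma dualAtomicNorm_le {n : ℕ} {q : Fin n → ℂ} {B : ℝ}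
    (h : ∀ f ∈ Set.Ico (0:ℝ) 1, ‖dotH q (vAtom n f)‖ ≤ B) : dualAtomicNorm q ≤ B :=
  ciSup_le fun f => h f f.2

lemma dualAtomicNorm_nonneg {n : ℕ} (q : Fin n → ℂ) : 0 ≤ dualAtomicNorm q :=
  Real.iSup_nonneg fun _ => norm_nonneg _

lemma dualAtomicNorm_sub_le {n : ℕ} (a b : Fin n → ℂ) :
    dualAtomicNorm (a - b) ≤ dualAtomicNorm a + dualAtomicNorm b :=
  dualAtomicNorm_le fun f hf => by
    rw [dotH_eq_inner, WithLp.toLp_sub, inner_sub_left, ← dotH_eq_inner, ← dotH_eq_inner]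
    exact (norm_sub_le _ _).trans (add_le_add (norm_dotH_vAtom_le_dualAtomicNorm a hf)
      (norm_dotH_vAtom_le_dualAtomicNorm b hf))

theorem dual_norm_error_bound_general (n : ℕ) (s xs : Fin n → ℂ) (τ lam η : ℝ)
    (hη : 1 ≤ η)
    (xh : Fin n → ℂ)
    (hmin : ∀ x : Fin n → ℂ,
        1 / 2 * l2norm (xh - s) ^ 2 + τ * atomicNorm xh ≤
          1 / 2 * l2norm (x - s) ^ 2 + τ * atomicNorm x)
    (hτw : η * dualAtomicNorm (s - lam • xs) ≤ τ) :
    dualAtomicNorm (lam • xs - xh) ≤ (1 + 1 / η) * τ ∧ (1 + 1 / η) * τ ≤ 2 * τ := by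
  have hη0 : 0 < η := by linarith
  have hτ : 0 ≤ τ := (mul_nonneg hη0.le (dualAtomicNorm_nonneg _)).trans hτw
  have hresidual : dualAtomicNorm (s - xh) ≤ τ :=
    dualAtomicNorm_le fun f hf => norm_dotH_sub_vAtom_le_of_minimizes s xh hτ hmin hf
  have hnoise : dualAtomicNorm (s - lam • xs) ≤ τ / η := by
    rw [le_div_iff₀ hη0]
    linarith
  have hinv : 1 / η ≤ 1 := (div_le_one hη0).mpr hη
  refine ⟨?_, by nlinarith⟩
  calc dualAtomicNorm (lam • xs - xh)
      = dualAtomicNorm ((s - xh) - (s - lam • xs)) := by rw [sub_sub_sub_cancel_left]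
    _ ≤ dualAtomicNorm (s - xh) + dualAtomicNorm (s - lam • xs) := dualAtomicNorm_sub_le _ _
    _ ≤ τ + τ / η := add_le_add hresidual hnoise
    _ = (1 + 1 / η) * τ := by ring

/-- let `x̂` minimize `(1/2)‖x - s‖₂² + τ‖x‖_𝒜` with `τ > 0`, let `x⋆ ∈ ℂⁿ`,
`λ > 0`, and set `w = s - λ x⋆`, `e = λ x⋆ - x̂`.  If `τ ≥ η ‖w‖_𝒜^*` for some constant
`η ≥ 1`, then `‖e‖_𝒜^* ≤ (1 + 1/η) τ ≤ 2τ`. -/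
theorem dual_norm_error_bound (n : ℕ) (s xs : Fin n → ℂ) (τ lam η : ℝ)
    (hτ : 0 < τ) (hlam : 0 < lam) (hη : 1 ≤ η)
    (xh : Fin n → ℂ)
    (hmin : ∀ x : Fin n → ℂ,
        1 / 2 * l2norm (xh - s) ^ 2 + τ * atomicNorm xh ≤
          1 / 2 * l2norm (x - s) ^ 2 + τ * atomicNorm x)
    (hτw : η * dualAtomicNorm (s - lam • xs) ≤ τ) :
    dualAtomicNorm (lam • xs - xh) ≤ (1 + 1 / η) * τ ∧ (1 + 1 / η) * τ ≤ 2 * τ :=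
  dual_norm_error_bound_general n s xs τ lam η hη xh hmin hτw

end
end

section
/- Let x in C^n be fixed and sigma >= 0. Let a be a standard complex Gaussian vector in C^n, let eps be a standard complex Gaussian CN(0,1) independent of a, let theta be uniformly distributed on [0,1) independent of (a, eps), set z = <a, x> + sigma*eps and y = sign(Re z) + j sign(Im z). Then the random vector e^{j 2 pi theta} * y * a in C^n has the same distribution as sqrt(2) * a. -/
open scoped BigOperators Real
open MeasureTheory ProbabilityTheory Finset

noncomputable section

/-- The law of a standard complex Gaussian `CN(0,1)`: independent real and imaginary parts,
each real Gaussian with mean `0` and variance `1/2`. -/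
def stdCGauss : Measure ℂ :=
  ((gaussianReal 0 (1 / 2)).prod (gaussianReal 0 (1 / 2))).map
    Complex.measurableEquivRealProd.symm

/-- The law of a standard complex Gaussian vector in `ℂⁿ` (i.i.d. `CN(0,1)` entries). -/
def stdCGaussVec (n : ℕ) : Measure (Fin n → ℂ) := Measure.pi fun _ : Fin n => stdCGauss

/-- `sign(t) = +1` if `t > 0`, and `-1` otherwise. -/
def sgn (t : ℝ) : ℝ := if 0 < t then 1 else -1

/-- The 1-bit (quadrant) quantization `sign(Re z) + j sign(Im z)` of `z ∈ ℂ`. -/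
def ysign (z : ℂ) : ℂ := (sgn z.re : ℂ) + (sgn z.im : ℂ) * Complex.I

/-- `λ = 2‖x‖₂ / sqrt(π (σ² + ‖x‖₂²))`. -/
def lamq {n : ℕ} (x : Fin n → ℂ) (σ : ℝ) : ℝ :=
  2 * l2norm x / Real.sqrt (Real.pi * (σ ^ 2 + l2norm x ^ 2))

/-- The uniform distribution on `[0, 1)`. -/
def unif01 : Measure ℝ := volume.restrict (Set.Ico (0:ℝ) 1)

/-! For fixed `a` and `ε`, the factor `y` has modulus `√2`, so its phase is absorbed by the
uniform phase `e^{j2πθ}` (translation invariance of the uniform law on the circle): given `a`,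
the vector `e^{j2πθ} y a` has the law of `√2 e^{j2πθ} a`. For fixed `θ`, the circularly
symmetric Gaussian vector `a` is invariant under the rotation by `e^{j2πθ}`: `CN(0,1)` is the
standard Gaussian of `ℂ ≅ ℝ²` scaled by `1/√2`, and the latter is invariant under isometries. -/

@[fun_prop]
lemma measurable_sgn : Measurable sgn :=
  Measurable.ite measurableSet_Ioi measurable_const measurable_const

@[fun_prop]
lemma measurable_ysign : Measurable ysign := by
  unfold ysign; fun_prop

@[fun_prop]
lemma measurable_dotH {n : ℕ} (x : Fin n → ℂ) :
    Measurable fun a : Fin n → ℂ => dotH a x := by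
  unfold dotH; fun_prop

lemma norm_ysign (z : ℂ) : ‖ysign z‖ = Real.sqrt 2 := by
  have hsq : ∀ t, sgn t * sgn t = 1 := fun t => by unfold sgn; split_ifs <;> norm_num
  rw [ysign, Complex.norm_def, Complex.normSq_add_mul_I, sq, sq, hsq, hsq]
  norm_num

instance : IsProbabilityMeasure stdCGauss :=
  Measure.isProbabilityMeasure_map (by fun_prop)

instance (n : ℕ) : IsProbabilityMeasure (stdCGaussVec n) := by
  unfold stdCGaussVec; infer_instance

instance : IsProbabilityMeasure unif01 :=
  ⟨by rw [unif01, Measure.restrict_apply_univ, Real.volume_Ico]; norm_num⟩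

section ProductFibers

variable {α β γ : Type*} [MeasurableSpace α] [MeasurableSpace β] [MeasurableSpace γ]
  {F G : α × β → γ}

lemma map_prod_congr_right (μ : Measure α) (ν : Measure β) [SFinite ν] (hF : Measurable F)
    (hG : Measurable G) (h : ∀ x, ν.map (fun y => F (x, y)) = ν.map (fun y => G (x, y))) :
    (μ.prod ν).map F = (μ.prod ν).map G := by
  ext s hs
  rw [Measure.map_apply hF hs, Measure.map_apply hG hs, Measure.prod_apply (hF hs),
    Measure.prod_apply (hG hs)]
  refine lintegral_congr fun x => ?_
  have hfiber := congrArg (· s) (h x)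
  rwa [Measure.map_apply (by fun_prop) hs, Measure.map_apply (by fun_prop) hs] at hfiber

lemma map_prod_congr_left (μ : Measure α) (ν : Measure β) [SFinite μ] [SFinite ν]
    (hF : Measurable F) (hG : Measurable G)
    (h : ∀ y, μ.map (fun x => F (x, y)) = μ.map (fun x => G (x, y))) :
    (μ.prod ν).map F = (μ.prod ν).map G := by
  ext s hs
  rw [Measure.map_apply hF hs, Measure.map_apply hG hs, Measure.prod_apply_symm (hF hs),
    Measure.prod_apply_symm (hG hs)]
  refine lintegral_congr fun y => ?_
  have hfiber := congrArg (· s) (h y)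
  rwa [Measure.map_apply (by fun_prop) hs, Measure.map_apply (by fun_prop) hs] at hfiber

end ProductFibers

section UniformPhase

lemma exp_two_pi_I_eq_toCircle (t : ℝ) :
    Complex.exp (2 * π * Complex.I * t) = AddCircle.toCircle (t : AddCircle (1 : ℝ)) := by
  rw [AddCircle.toCircle_apply_mk, Circle.coe_exp]
  push_cast; ring_nf

lemma map_unif01_comp_mk {β : Type*} [MeasurableSpace β] {f : AddCircle (1 : ℝ) → β}
    (hf : Measurable f) : unif01.map (fun t : ℝ => f t) = volume.map f := by
  have hmk : MeasurePreserving ((↑) : ℝ → AddCircle (1 : ℝ)) unif01 volume := by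
    rw [unif01, Measure.restrict_congr_set Ico_ae_eq_Ioc]
    simpa using AddCircle.measurePreserving_mk (T := 1) 0
  rw [← hmk.map_eq, Measure.map_map hf hmk.measurable]
  rfl

lemma map_exp_two_pi_I_add_unif01 (s : ℝ) :
    unif01.map (fun t : ℝ => Complex.exp (2 * π * Complex.I * (t + s : ℝ))) =
      unif01.map fun t : ℝ => Complex.exp (2 * π * Complex.I * t) := by
  set E : AddCircle (1 : ℝ) → ℂ := fun q => AddCircle.toCircle q
  have hE : Measurable E := by fun_prop
  have hshift : (fun t : ℝ => Complex.exp (2 * π * Complex.I * (t + s : ℝ))) =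
      fun t : ℝ => (E ∘ ((s : AddCircle (1 : ℝ)) + ·)) t := by
    ext t
    simp only [exp_two_pi_I_eq_toCircle, Function.comp_apply, AddCircle.coe_add, add_comm, E]
  have hbase : (fun t : ℝ => Complex.exp (2 * π * Complex.I * t)) = fun t : ℝ => E t :=
    funext exp_two_pi_I_eq_toCircle
  rw [hshift, hbase, map_unif01_comp_mk (hE.comp (measurable_const_add _)), map_unif01_comp_mk hE,
    ← Measure.map_map hE (measurable_const_add _), map_add_left_eq_self]

lemma map_exp_two_pi_I_mul_unif01 (w : ℂ) :
    unif01.map (fun t : ℝ => Complex.exp (2 * π * Complex.I * t) * w) =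
      unif01.map fun t : ℝ => Complex.exp (2 * π * Complex.I * t) * ‖w‖ := by
  set s := Complex.arg w / (2 * π)
  have hphase : ∀ t : ℝ, Complex.exp (2 * π * Complex.I * t) * w =
      Complex.exp (2 * π * Complex.I * (t + s : ℝ)) * ‖w‖ := fun t => by
    conv_lhs => rw [← Complex.norm_mul_exp_arg_mul_I w]
    rw [show 2 * π * Complex.I * (t + s : ℝ) =
        2 * π * Complex.I * t + Complex.arg w * Complex.I by push_cast [s]; field_simp,
      Complex.exp_add]
    ring
  calc unif01.map (fun t : ℝ => Complex.exp (2 * π * Complex.I * t) * w)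
      = (unif01.map fun t : ℝ => Complex.exp (2 * π * Complex.I * (t + s : ℝ))).map
          (· * (‖w‖ : ℂ)) := by
        simp_rw [hphase]; rw [Measure.map_map (by fun_prop) (by fun_prop)]; rfl
    _ = _ := by
        rw [map_exp_two_pi_I_add_unif01, Measure.map_map (by fun_prop) (by fun_prop)]; rfl

lemma map_exp_two_pi_I_mul_ysign_smul_unif01 {n : ℕ} (z : ℂ) (v : Fin n → ℂ) :
    unif01.map (fun t : ℝ => (Complex.exp (2 * π * Complex.I * t) * ysign z) • v) =
      unif01.map fun t : ℝ => (Complex.exp (2 * π * Complex.I * t) * Real.sqrt 2) • v := by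
  have hsmul : Measurable fun c : ℂ => c • v := measurable_id.smul_const v
  have h := congrArg (Measure.map (· • v)) (map_exp_two_pi_I_mul_unif01 (ysign z))
  rwa [norm_ysign, Measure.map_map hsmul (by fun_prop), Measure.map_map hsmul (by fun_prop)] at h

end UniformPhase

section RotationInvariance

lemma gaussianReal_half_eq_map :
    gaussianReal 0 (1 / 2) = (gaussianReal 0 1).map ((Real.sqrt 2)⁻¹ * ·) := by
  rw [gaussianReal_map_const_mul, mul_zero, mul_one]
  congr
  ext
  simp [inv_pow]

lemma stdCGauss_eq_map_stdGaussian :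
    stdCGauss = (stdGaussian ℂ).map fun z => (Real.sqrt 2)⁻¹ • z := by
  rw [stdGaussian_eq_map_pi_orthonormalBasis Complex.orthonormalBasisOneI,
    Measure.map_map (by fun_prop) (by fun_prop), stdCGauss, gaussianReal_half_eq_map,
    Measure.map_prod_map _ _ (by fun_prop) (by fun_prop),
    ← (measurePreserving_finTwoArrow (gaussianReal 0 1)).map_eq,
    Measure.map_map (by fun_prop) (by fun_prop), Measure.map_map (by fun_prop) (by fun_prop)]
  congr 1
  ext x
  apply Complex.ext <;>
    simp [Complex.measurableEquivRealProd, -Complex.real_smul, Complex.smul_re, Complex.smul_im]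

lemma map_const_mul_stdCGauss {u : ℂ} (hu : ‖u‖ = 1) :
    stdCGauss.map (u * ·) = stdCGauss := by
  let c : Circle := ⟨u, by simp [Submonoid.unitSphere, hu]⟩
  have hrot : (u * ·) ∘ (fun z : ℂ => (Real.sqrt 2)⁻¹ • z) =
      (fun z : ℂ => (Real.sqrt 2)⁻¹ • z) ∘ rotation c := by
    ext1 z
    simp only [Function.comp_apply, rotation_apply, Complex.real_smul]
    exact mul_left_comm _ _ _
  conv_rhs => rw [stdCGauss_eq_map_stdGaussian, ← stdGaussian_map (rotation c)]
  rw [stdCGauss_eq_map_stdGaussian, Measure.map_map (by fun_prop) (by fun_prop), hrot,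
    Measure.map_map (by fun_prop) (by fun_prop)]

lemma map_const_smul_stdCGaussVec (n : ℕ) {u : ℂ} (hu : ‖u‖ = 1) :
    (stdCGaussVec n).map (u • ·) = stdCGaussVec n :=
  (measurePreserving_pi _ _ fun _ =>
    ⟨measurable_const_mul u, map_const_mul_stdCGauss hu⟩).map_eq

lemma map_mul_smul_stdCGaussVec (n : ℕ) {u : ℂ} (hu : ‖u‖ = 1) (r : ℝ) :
    (stdCGaussVec n).map (fun v => (u * r) • v) = (stdCGaussVec n).map (r • ·) := by
  have hfactor : (fun v : Fin n → ℂ => (u * r) • v) = (r • ·) ∘ (u • ·) := by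
    ext v k
    simp only [Pi.smul_apply, Function.comp_apply, smul_eq_mul, Complex.real_smul]
    ring
  rw [hfactor, ← Measure.map_map (by fun_prop) (by fun_prop), map_const_smul_stdCGaussVec n hu]

end RotationInvariance

theorem symmetrized_distribution_general
    {Ω : Type} [MeasurableSpace Ω] (P : Measure Ω)
    (n : ℕ) (x : Fin n → ℂ) (σ : ℝ)
    (a : Ω → Fin n → ℂ) (ε : Ω → ℂ) (θ : Ω → ℝ)
    (hlaw : Measure.map (fun ω => (a ω, ε ω, θ ω)) P =
      (stdCGaussVec n).prod (stdCGauss.prod unif01)) :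
    Measure.map (fun ω =>
        (Complex.exp (2 * Real.pi * Complex.I * θ ω) *
          ysign (dotH (a ω) x + (σ : ℂ) * ε ω)) • a ω) P =
      Measure.map (fun ω => (Real.sqrt 2 : ℝ) • a ω) P := by
  set μ := (stdCGaussVec n).prod (stdCGauss.prod unif01)
  have hX : HasLaw (fun ω => (a ω, ε ω, θ ω)) μ P :=
    ⟨aemeasurable_of_map_neZero (by rw [hlaw]; infer_instance), hlaw⟩
  have law_comp {F : (Fin n → ℂ) × ℂ × ℝ → Fin n → ℂ} (hF : Measurable F) :
      P.map (fun ω => F (a ω, ε ω, θ ω)) = μ.map F :=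
    (HasLaw.fun_comp ⟨hF.aemeasurable, rfl⟩ hX).map_eq
  rw [law_comp (F := fun p => (Complex.exp (2 * π * Complex.I * p.2.2) *
      ysign (dotH p.1 x + σ * p.2.1)) • p.1) (by fun_prop),
    law_comp (F := fun p => Real.sqrt 2 • p.1) (by fun_prop)]
  calc
    _ = μ.map fun p => (Complex.exp (2 * π * Complex.I * p.2.2) * Real.sqrt 2) • p.1 := by
      refine map_prod_congr_right _ _ (by fun_prop) (by fun_prop) fun v => ?_
      refine map_prod_congr_right _ _ (by fun_prop) (by fun_prop) fun e => ?_
      exact map_exp_two_pi_I_mul_ysign_smul_unif01 (dotH v x + σ * e) v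
    _ = _ := by
      refine map_prod_congr_left _ _ (by fun_prop) (by fun_prop) fun p => ?_
      have hunit : ‖Complex.exp (2 * π * Complex.I * p.2)‖ = 1 := by simp [Complex.norm_exp]
      exact map_mul_smul_stdCGaussVec n hunit _

/-- let `x ∈ ℂⁿ` be fixed and `σ ≥ 0`.  Let `a` be a standard complex Gaussian
vector, `ε ~ CN(0,1)`, `θ` uniform on `[0,1)`, all independent; set `z = ⟨a,x⟩ + σε` and
`y = sign(Re z) + j sign(Im z)`.  Then `e^{j2πθ} y a` has the same distribution as `√2 a`. -/
theorem symmetrized_distribution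
    {Ω : Type} [MeasurableSpace Ω] (P : Measure Ω) [IsProbabilityMeasure P]
    (n : ℕ) (x : Fin n → ℂ) (σ : ℝ) (hσ : 0 ≤ σ)
    (a : Ω → Fin n → ℂ) (ε : Ω → ℂ) (θ : Ω → ℝ)
    (hlaw : Measure.map (fun ω => (a ω, ε ω, θ ω)) P =
      (stdCGaussVec n).prod (stdCGauss.prod unif01)) :
    Measure.map (fun ω =>
        (Complex.exp (2 * Real.pi * Complex.I * θ ω) *
          ysign (dotH (a ω) x + (σ : ℂ) * ε ω)) • a ω) P =
      Measure.map (fun ω => (Real.sqrt 2 : ℝ) • a ω) P :=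
  symmetrized_distribution_general P n x σ a ε θ hlaw
end
end
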